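/- Let p > 1, γ > 0 and ω > 0, and suppose t₁, t₂ are real numbers with 0 < t₁ < t₂ < 1 satisfying t₁^{p−1} − t₁^{p+1} = t₂^{p−1} − t₂^{p+1} and 1/t₁ + 1/t₂ = γ√ω. Set y_j = (2/((p−1)√ω))·arctanh(t_j) for j = 1,2 and define φ : ℝ∖{0} → ℝ by φ(x) = (((p+1)ω/2)·sech²(((p−1)√ω/2)·(x+y₁)))^{1/(p−1)} for x > 0 and φ(x) = −(((p+1)ω/2)·sech²(((p−1)√ω/2)·(x−y₂)))^{1/(p−1)} for x < 0. Then φ is twice continuously differentiable on ℝ∖{0} and satisfies −φ''(x) + ω·φ(x) − |φ(x)|^{p−1}·φ(x) = 0 for all x ≠ 0; the one-sided limits φ(0±) and φ'(0±) exist and satisfy φ'(0−) = φ'(0+) and φ(0+) − φ(0−) = −γ·φ'(0+). -/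

import Mathlib

open MeasureTheory Real Set Filter Topology

/-- Inverse hyperbolic tangent. -/
noncomputable def arctanh (x : ℝ) : ℝ := Real.log ((1 + x) / (1 - x)) / 2

/-!
On each half-line `φ` is, up to sign, a translate of the soliton
`Q x = ((p+1)ω/2 · sech²(κ x))^{1/(p-1)}`, `κ = (p-1)√ω/2`. Writing `T = tanh (κ x)`, one
has `Q^{p-1} = (p+1)ω/2 · (1 - T²)` and `Q' = -√ω T Q`, from which `-Q'' + ωQ - Q^p = 0` is
a direct computation; the equation is invariant under translations and under `u ↦ -u`.
The shifts are chosen so that `tanh (κ y₁) = t₁` and `tanh (-κ y₂) = -t₂`, so the jump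
conditions at the origin become `t₁ Q(y₁) = t₂ Q(-y₂)`, the `1/(p-1)`-th power of the first
matching equation, and `Q(y₁) + Q(-y₂) = γ√ω t₁ Q(y₁)`, which is the second one.
-/

lemma arctanh_eq_artanh {t : ℝ} (ht : t ∈ Icc (-1) 1) : arctanh t = artanh t := by
  rw [artanh_eq_half_log ht, arctanh]
  ring

lemma tanh_arctanh {t : ℝ} (ht : t ∈ Ioo (-1) 1) : tanh (arctanh t) = t := by
  rw [arctanh_eq_artanh (Ioo_subset_Icc_self ht), tanh_artanh ht]

lemma one_div_cosh_sq (x : ℝ) : (1 / cosh x) ^ 2 = 1 - tanh x ^ 2 := by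
  have := cosh_sq_sub_sinh_sq x
  have := (cosh_pos x).ne'
  rw [tanh_eq_sinh_div_cosh]
  field_simp
  linarith

lemma hasDerivAt_tanh (x : ℝ) : HasDerivAt tanh (1 - tanh x ^ 2) x := by
  rw [show tanh = fun y => sinh y / cosh y from funext tanh_eq_sinh_div_cosh]
  refine ((hasDerivAt_sinh x).div (hasDerivAt_cosh x) (cosh_pos x).ne').congr_deriv ?_
  have := cosh_sq_sub_sinh_sq x
  field_simp

lemma hasDerivAt_tanh_const_mul (c x : ℝ) :
    HasDerivAt (fun y => tanh (c * y)) ((1 - tanh (c * x) ^ 2) * c) x :=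
  (hasDerivAt_tanh _).comp x (by simpa using (hasDerivAt_id x).const_mul c)

lemma HasDerivAt.rpow_const_of_eq_mul {f : ℝ → ℝ} {c r x : ℝ}
    (hf : HasDerivAt f (c * f x) x) (hx : 0 < f x) :
    HasDerivAt (fun y => f y ^ r) (r * c * f x ^ r) x := by
  convert hf.rpow_const (p := r) (Or.inl hx.ne') using 1
  rw [rpow_sub_one hx.ne']
  field_simp

noncomputable def nlsResidual (p ω : ℝ) (u : ℝ → ℝ) (x : ℝ) : ℝ :=
  -deriv (deriv u) x + ω * u x - |u x| ^ (p - 1) * u x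

section Residual

variable {p ω : ℝ}

lemma nlsResidual_neg (u : ℝ → ℝ) (x : ℝ) :
    nlsResidual p ω (fun y => -u y) x = -nlsResidual p ω u x := by
  simp only [nlsResidual, deriv.fun_neg', abs_neg]
  ring

lemma nlsResidual_comp_add_const (u : ℝ → ℝ) (a x : ℝ) :
    nlsResidual p ω (fun y => u (y + a)) x = nlsResidual p ω u (x + a) := by
  have h : deriv (fun y => u (y + a)) = fun y => deriv u (y + a) :=
    funext fun y => deriv_comp_add_const u a y
  simp only [nlsResidual, h, deriv_comp_add_const]

lemma nlsResidual_comp_sub_const (u : ℝ → ℝ) (a x : ℝ) :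
    nlsResidual p ω (fun y => u (y - a)) x = nlsResidual p ω u (x - a) := by
  simpa only [sub_eq_add_neg] using nlsResidual_comp_add_const u (-a) x

lemma nlsResidual_congr {u v : ℝ → ℝ} {x : ℝ} (h : v =ᶠ[𝓝 x] u) :
    nlsResidual p ω v x = nlsResidual p ω u x := by
  rw [nlsResidual, nlsResidual, h.deriv.deriv_eq, h.eq_of_nhds]

lemma nlsResidual_eq_zero_of_eqOn {φ f g : ℝ → ℝ} {a x : ℝ}
    (hf : ∀ y, nlsResidual p ω f y = 0) (hg : ∀ y, nlsResidual p ω g y = 0)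
    (hfφ : EqOn φ f (Ioi a)) (hgφ : EqOn φ g (Iio a)) (hx : x ≠ a) : nlsResidual p ω φ x = 0 := by
  rcases hx.lt_or_gt with h | h
  · rw [nlsResidual_congr (hgφ.eventuallyEq_of_mem (Iio_mem_nhds h)), hg]
  · rw [nlsResidual_congr (hfφ.eventuallyEq_of_mem (Ioi_mem_nhds h)), hf]

end Residual

lemma mul_rpow_one_sub_sq {p A t : ℝ} (hp : p ≠ 1) (hA : 0 ≤ A) (ht₀ : 0 < t) (ht₁ : t ≤ 1) :
    t * (A * (1 - t ^ 2)) ^ (1 / (p - 1)) =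
      (A * (t ^ (p - 1) - t ^ (p + 1))) ^ (1 / (p - 1)) := by
  have hp' : p - 1 ≠ 0 := sub_ne_zero.2 hp
  have hsq : t ^ (p + 1) = t ^ (p - 1) * t ^ 2 := by
    rw [show p + 1 = p - 1 + 2 by ring, rpow_add ht₀, rpow_two]
  calc t * (A * (1 - t ^ 2)) ^ (1 / (p - 1))
      = (t ^ (p - 1)) ^ (1 / (p - 1)) * (A * (1 - t ^ 2)) ^ (1 / (p - 1)) := by
        rw [one_div, rpow_rpow_inv ht₀.le hp']
    _ = (A * (t ^ (p - 1) - t ^ (p + 1))) ^ (1 / (p - 1)) := by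
        rw [← mul_rpow (rpow_nonneg ht₀.le _) (mul_nonneg hA (by nlinarith)), hsq]
        ring_nf

noncomputable def solitonProfile (p ω x : ℝ) : ℝ :=
  ((p + 1) * ω / 2 * (1 / cosh ((p - 1) * √ω / 2 * x)) ^ 2) ^ (1 / (p - 1))

lemma solitonProfile_eq_tanh (p ω x : ℝ) : solitonProfile p ω x =
    ((p + 1) * ω / 2 * (1 - tanh ((p - 1) * √ω / 2 * x) ^ 2)) ^ (1 / (p - 1)) := by
  rw [solitonProfile, one_div_cosh_sq]

section Soliton

variable {p ω : ℝ} (hp : 1 < p) (hω : 0 < ω)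
include hp hω

lemma solitonProfile_base_pos (x : ℝ) :
    0 < (p + 1) * ω / 2 * (1 / cosh ((p - 1) * √ω / 2 * x)) ^ 2 := by
  have := cosh_pos ((p - 1) * √ω / 2 * x)
  have : 0 < p + 1 := by linarith
  positivity

lemma solitonProfile_nonneg (x : ℝ) : 0 ≤ solitonProfile p ω x :=
  rpow_nonneg (solitonProfile_base_pos hp hω x).le _

lemma solitonProfile_rpow (x : ℝ) : solitonProfile p ω x ^ (p - 1) =
    (p + 1) * ω / 2 * (1 - tanh ((p - 1) * √ω / 2 * x) ^ 2) := by
  have hbase := solitonProfile_base_pos hp hω x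
  rw [one_div_cosh_sq] at hbase
  rw [solitonProfile_eq_tanh, one_div, rpow_inv_rpow hbase.le (by linarith)]

lemma contDiff_solitonProfile {n : WithTop ℕ∞} : ContDiff ℝ n (solitonProfile p ω) := by
  refine ContDiff.rpow_const_of_ne ?_ fun x => (solitonProfile_base_pos hp hω x).ne'
  exact contDiff_const.mul ((contDiff_const.div (contDiff_cosh.comp
    (contDiff_const.mul contDiff_id)) fun x => (cosh_pos _).ne').pow 2)

lemma hasDerivAt_solitonProfile (x : ℝ) : HasDerivAt (solitonProfile p ω)
    (-√ω * tanh ((p - 1) * √ω / 2 * x) * solitonProfile p ω x) x := by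
  rw [show solitonProfile p ω = _ from funext (solitonProfile_eq_tanh p ω)]
  set κ := (p - 1) * √ω / 2 with hκ
  have hbase : HasDerivAt (fun y => (p + 1) * ω / 2 * (1 - tanh (κ * y) ^ 2))
      (-2 * κ * tanh (κ * x) * ((p + 1) * ω / 2 * (1 - tanh (κ * x) ^ 2))) x := by
    have htanh := hasDerivAt_tanh_const_mul κ x
    refine (((htanh.pow 2).const_sub 1).const_mul _).congr_deriv ?_
    push_cast
    ring
  have hpos : 0 < (p + 1) * ω / 2 * (1 - tanh (κ * x) ^ 2) := by
    simpa only [one_div_cosh_sq] using solitonProfile_base_pos hp hω x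
  convert hbase.rpow_const_of_eq_mul (r := 1 / (p - 1)) hpos using 1
  have : p - 1 ≠ 0 := by linarith
  rw [hκ]
  field_simp

lemma nlsResidual_solitonProfile (x : ℝ) : nlsResidual p ω (solitonProfile p ω) x = 0 := by
  set κ := (p - 1) * √ω / 2 with hκ
  set Q := solitonProfile p ω
  have hQ' : deriv Q = fun y => -√ω * tanh (κ * y) * Q y :=
    funext fun y => (hasDerivAt_solitonProfile hp hω y).deriv
  have hQ'' : HasDerivAt (deriv Q)
      (-√ω * ((1 - tanh (κ * x) ^ 2) * κ) * Q x +
        -√ω * tanh (κ * x) * (-√ω * tanh (κ * x) * Q x)) x := by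
    rw [hQ']
    exact ((hasDerivAt_tanh_const_mul κ x).const_mul (-√ω)).mul
      (hasDerivAt_solitonProfile hp hω x)
  rw [nlsResidual, hQ''.deriv, abs_of_nonneg (solitonProfile_nonneg hp hω x),
    solitonProfile_rpow hp hω, hκ]
  linear_combination ((p - 1) / 2 * (1 - tanh (κ * x) ^ 2) - tanh (κ * x) ^ 2) * Q x *
    sq_sqrt hω.le

lemma deriv_solitonProfile_of_tanh_eq {x t : ℝ} (hx : tanh ((p - 1) * √ω / 2 * x) = t) :
    deriv (solitonProfile p ω) x = -√ω * t * solitonProfile p ω x := by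
  rw [(hasDerivAt_solitonProfile hp hω x).deriv, hx]

lemma mul_solitonProfile_of_tanh_sq_eq {x t : ℝ} (ht₀ : 0 < t) (ht₁ : t ≤ 1)
    (hx : tanh ((p - 1) * √ω / 2 * x) ^ 2 = t ^ 2) :
    t * solitonProfile p ω x =
      ((p + 1) * ω / 2 * (t ^ (p - 1) - t ^ (p + 1))) ^ (1 / (p - 1)) := by
  have : 0 < p + 1 := by linarith
  rw [solitonProfile_eq_tanh, hx, mul_rpow_one_sub_sq (by linarith) (by positivity) ht₀ ht₁]

end Soliton

lemma tanh_mul_arctanh {p ω t : ℝ} (hp : 1 < p) (hω : 0 < ω) (ht : t ∈ Ioo (-1) 1) :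
    tanh ((p - 1) * √ω / 2 * (2 / ((p - 1) * √ω) * arctanh t)) = t := by
  have : p - 1 ≠ 0 := (sub_pos.2 hp).ne'
  have : √ω ≠ 0 := (sqrt_pos.2 hω).ne'
  rw [show (p - 1) * √ω / 2 * (2 / ((p - 1) * √ω) * arctanh t) = arctanh t by field_simp,
    tanh_arctanh ht]

lemma contDiffOn_compl_singleton_of_eqOn {φ f g : ℝ → ℝ} {a : ℝ} {n : WithTop ℕ∞}
    (hf : ContDiffOn ℝ n f (Ioi a)) (hg : ContDiffOn ℝ n g (Iio a))
    (hfφ : EqOn φ f (Ioi a)) (hgφ : EqOn φ g (Iio a)) : ContDiffOn ℝ n φ {a}ᶜ := by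
  intro x hx
  rcases (mem_compl_singleton_iff.mp hx).lt_or_gt with h | h
  · exact ((hg.congr hgφ).contDiffAt (Iio_mem_nhds h)).contDiffWithinAt
  · exact ((hf.congr hfφ).contDiffAt (Ioi_mem_nhds h)).contDiffWithinAt

lemma tendsto_nhdsWithin_of_eqOn {X Y : Type*} [TopologicalSpace X] [TopologicalSpace Y]
    {φ f : X → Y} {s : Set X} {a : X} (h : EqOn φ f s) (hf : ContinuousAt f a) :
    Tendsto φ (𝓝[s] a) (𝓝 (f a)) :=
  tendsto_nhdsWithin_congr (fun _ hx => (h hx).symm) (hf.tendsto.mono_left nhdsWithin_le_nhds)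

lemma tendsto_deriv_nhdsWithin_of_eqOn {φ f : ℝ → ℝ} {s : Set ℝ} {a : ℝ} (h : EqOn φ f s)
    (hs : IsOpen s) (hf : ContDiff ℝ 1 f) : Tendsto (deriv φ) (𝓝[s] a) (𝓝 (deriv f a)) :=
  tendsto_nhdsWithin_of_eqOn (h.deriv hs) (hf.continuous_deriv le_rfl).continuousAt

theorem asymmetric_profile_solves_NLS_delta_prime_general (p γ ω : ℝ) (hp : 1 < p)
    (hω : 0 < ω)
    (t₁ t₂ : ℝ) (ht₁ : 0 < t₁) (ht₁₂ : t₁ < t₂) (ht₂ : t₂ < 1)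
    (hmatch : t₁ ^ (p - 1) - t₁ ^ (p + 1) = t₂ ^ (p - 1) - t₂ ^ (p + 1))
    (hsum : 1 / t₁ + 1 / t₂ = γ * Real.sqrt ω)
    (y₁ y₂ : ℝ) (hy₁ : y₁ = 2 / ((p - 1) * Real.sqrt ω) * arctanh t₁)
    (hy₂ : y₂ = 2 / ((p - 1) * Real.sqrt ω) * arctanh t₂)
    (φ : ℝ → ℝ)
    (hφp : ∀ x : ℝ, 0 < x → φ x = ((p + 1) * ω / 2 *
      (1 / Real.cosh ((p - 1) * Real.sqrt ω / 2 * (x + y₁))) ^ 2) ^ (1 / (p - 1)))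
    (hφm : ∀ x : ℝ, x < 0 → φ x = -(((p + 1) * ω / 2 *
      (1 / Real.cosh ((p - 1) * Real.sqrt ω / 2 * (x - y₂))) ^ 2) ^ (1 / (p - 1)))) :
    ContDiffOn ℝ 2 φ {(0 : ℝ)}ᶜ ∧
    (∀ x : ℝ, x ≠ 0 → -(deriv (deriv φ) x) + ω * φ x - |φ x| ^ (p - 1) * φ x = 0) ∧
    ∃ Lp Lm Dp Dm : ℝ,
      Filter.Tendsto φ (nhdsWithin 0 (Set.Ioi 0)) (nhds Lp) ∧
      Filter.Tendsto φ (nhdsWithin 0 (Set.Iio 0)) (nhds Lm) ∧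
      Filter.Tendsto (deriv φ) (nhdsWithin 0 (Set.Ioi 0)) (nhds Dp) ∧
      Filter.Tendsto (deriv φ) (nhdsWithin 0 (Set.Iio 0)) (nhds Dm) ∧
      Dm = Dp ∧ Lp - Lm = -γ * Dp := by
  set Q := solitonProfile p ω
  have hR : EqOn φ (fun x => Q (x + y₁)) (Ioi 0) := fun x hx => hφp x hx
  have hL : EqOn φ (fun x => -Q (x - y₂)) (Iio 0) := fun x hx => hφm x hx
  have hQR : ContDiff ℝ 2 fun x => Q (x + y₁) :=
    (contDiff_solitonProfile hp hω).comp (contDiff_id.add contDiff_const)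
  have hQL : ContDiff ℝ 2 fun x => -Q (x - y₂) :=
    ((contDiff_solitonProfile hp hω).comp (contDiff_id.sub contDiff_const)).neg
  have htanh₁ : tanh ((p - 1) * √ω / 2 * y₁) = t₁ :=
    hy₁ ▸ tanh_mul_arctanh hp hω ⟨by linarith, by linarith⟩
  have htanh₂ : tanh ((p - 1) * √ω / 2 * -y₂) = -t₂ := by
    rw [mul_neg, tanh_neg, hy₂, tanh_mul_arctanh hp hω ⟨by linarith, ht₂⟩]
  have hQ'₁ : deriv Q y₁ = -√ω * t₁ * Q y₁ := deriv_solitonProfile_of_tanh_eq hp hω htanh₁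
  have hQ'₂ : deriv Q (-y₂) = -√ω * -t₂ * Q (-y₂) :=
    deriv_solitonProfile_of_tanh_eq hp hω htanh₂
  have hQ₁₂ : t₁ * Q y₁ = t₂ * Q (-y₂) := by
    rw [mul_solitonProfile_of_tanh_sq_eq hp hω ht₁ (by linarith) (by rw [htanh₁]), hmatch,
      mul_solitonProfile_of_tanh_sq_eq hp hω (by linarith) ht₂.le (by rw [htanh₂, neg_sq])]
  refine ⟨contDiffOn_compl_singleton_of_eqOn hQR.contDiffOn hQL.contDiffOn hR hL,
    fun x hx => nlsResidual_eq_zero_of_eqOn (fun y => ?_) (fun y => ?_) hR hL hx,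
    Q y₁, -Q (-y₂), -√ω * t₁ * Q y₁, -(√ω * t₂ * Q (-y₂)), ?_, ?_, ?_, ?_, ?_, ?_⟩
  · rw [nlsResidual_comp_add_const, nlsResidual_solitonProfile hp hω]
  · rw [nlsResidual_neg, nlsResidual_comp_sub_const, nlsResidual_solitonProfile hp hω, neg_zero]
  · simpa only [zero_add] using tendsto_nhdsWithin_of_eqOn (a := 0) hR hQR.continuous.continuousAt
  · simpa only [zero_sub] using tendsto_nhdsWithin_of_eqOn (a := 0) hL hQL.continuous.continuousAt
  · simpa only [deriv_comp_add_const, zero_add, hQ'₁] using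
      tendsto_deriv_nhdsWithin_of_eqOn (a := 0) hR isOpen_Ioi (hQR.of_le one_le_two)
  · simpa only [deriv.fun_neg, deriv_comp_sub_const, zero_sub, hQ'₂, neg_mul, mul_neg,
      neg_neg] using
      tendsto_deriv_nhdsWithin_of_eqOn (a := 0) hL isOpen_Iio (hQL.of_le one_le_two)
  · linear_combination √ω * hQ₁₂
  · rw [show -γ * (-√ω * t₁ * Q y₁) = γ * √ω * t₁ * Q y₁ by ring, ← hsum]
    have : t₂ ≠ 0 := by linarith
    field_simp
    linear_combination -hQ₁₂

/-- The asymmetric profile `φ_{ω,γ}^{as}` is `C²` away from the origin, solves the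
stationary NLS equation `−φ'' + ωφ − |φ|^{p−1}φ = 0` for `x ≠ 0`, and its one-sided
boundary values satisfy the δ'-vertex conditions `φ'(0−) = φ'(0+)` and
`φ(0+) − φ(0−) = −γ·φ'(0+)`. -/
theorem asymmetric_profile_solves_NLS_delta_prime (p γ ω : ℝ) (hp : 1 < p) (hγ : 0 < γ)
    (hω : 0 < ω)
    (t₁ t₂ : ℝ) (ht₁ : 0 < t₁) (ht₁₂ : t₁ < t₂) (ht₂ : t₂ < 1)
    (hmatch : t₁ ^ (p - 1) - t₁ ^ (p + 1) = t₂ ^ (p - 1) - t₂ ^ (p + 1))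
    (hsum : 1 / t₁ + 1 / t₂ = γ * Real.sqrt ω)
    (y₁ y₂ : ℝ) (hy₁ : y₁ = 2 / ((p - 1) * Real.sqrt ω) * arctanh t₁)
    (hy₂ : y₂ = 2 / ((p - 1) * Real.sqrt ω) * arctanh t₂)
    (φ : ℝ → ℝ)
    (hφp : ∀ x : ℝ, 0 < x → φ x = ((p + 1) * ω / 2 *
      (1 / Real.cosh ((p - 1) * Real.sqrt ω / 2 * (x + y₁))) ^ 2) ^ (1 / (p - 1)))
    (hφm : ∀ x : ℝ, x < 0 → φ x = -(((p + 1) * ω / 2 *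
      (1 / Real.cosh ((p - 1) * Real.sqrt ω / 2 * (x - y₂))) ^ 2) ^ (1 / (p - 1)))) :
    ContDiffOn ℝ 2 φ {(0 : ℝ)}ᶜ ∧
    (∀ x : ℝ, x ≠ 0 → -(deriv (deriv φ) x) + ω * φ x - |φ x| ^ (p - 1) * φ x = 0) ∧
    ∃ Lp Lm Dp Dm : ℝ,
      Filter.Tendsto φ (nhdsWithin 0 (Set.Ioi 0)) (nhds Lp) ∧
      Filter.Tendsto φ (nhdsWithin 0 (Set.Iio 0)) (nhds Lm) ∧
      Filter.Tendsto (deriv φ) (nhdsWithin 0 (Set.Ioi 0)) (nhds Dp) ∧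
      Filter.Tendsto (deriv φ) (nhdsWithin 0 (Set.Iio 0)) (nhds Dm) ∧
      Dm = Dp ∧ Lp - Lm = -γ * Dp :=
  asymmetric_profile_solves_NLS_delta_prime_general p γ ω hp hω t₁ t₂ ht₁ ht₁₂ ht₂ hmatch hsum y₁ y₂
    hy₁ hy₂ φ hφp hφm
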